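/- Let f: ℝⁿ → ℝ have M-Lipschitz Hessian. Suppose (∇²f(y) + (σ + λ)I)d = −∇f(y) with σ, λ ≥ 0, λ ≤ (θ−1)σ for some θ > 1, ‖d‖ ≤ σ/M, and σ ≤ √(2Mε/(1+2θ)). Then ‖∇f(y + d)‖ ≤ ε. -/

import Mathlib

open Real

/-!
Along the segment `t ↦ y + t • d`, the Lipschitz bound on the Hessian controls the first-order
Taylor remainder by `M/2 · ‖d‖²`. The Newton-type equation says that the first-order model of
`∇f` at `y + d` equals `-(σ + λ) d`, so `‖∇f(y + d)‖ ≤ M/2 · ‖d‖² + θσ‖d‖`, and the bounds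
`‖d‖ ≤ σ/M` and `σ² ≤ 2Mε/(1 + 2θ)` make the right-hand side at most `ε`.
-/

section TaylorRemainder

variable {E F : Type*} [NormedAddCommGroup E] [NormedSpace ℝ E]
  [NormedAddCommGroup F] [NormedSpace ℝ F]

theorem norm_sub_sub_fderiv_le_of_lipschitz_fderiv {g : E → F} (hg : Differentiable ℝ g)
    {M : ℝ} (hLip : ∀ u v, ‖fderiv ℝ g u - fderiv ℝ g v‖ ≤ M * ‖u - v‖) (x h : E) :
    ‖g (x + h) - g x - fderiv ℝ g x h‖ ≤ M / 2 * ‖h‖ ^ 2 := by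
  set R : ℝ → F := fun t => g (x + t • h) - g x - t • fderiv ℝ g x h
  have hR : ∀ t, HasDerivAt R (fderiv ℝ g (x + t • h) h - fderiv ℝ g x h) t := by
    intro t
    have hline : HasDerivAt (fun t : ℝ => x + t • h) h t := by
      simpa using ((hasDerivAt_id t).smul_const h).const_add x
    have := (((hg _).hasFDerivAt.comp_hasDerivAt t hline).sub_const (g x)).sub
      ((hasDerivAt_id t).smul_const (fderiv ℝ g x h))
    simp only [one_smul] at this
    exact this
  have hR'_le : ∀ t ∈ Set.Ico (0 : ℝ) 1,
      ‖fderiv ℝ g (x + t • h) h - fderiv ℝ g x h‖ ≤ M * ‖h‖ ^ 2 * t := by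
    intro t ht
    calc ‖fderiv ℝ g (x + t • h) h - fderiv ℝ g x h‖
        ≤ ‖fderiv ℝ g (x + t • h) - fderiv ℝ g x‖ * ‖h‖ :=
          (fderiv ℝ g (x + t • h) - fderiv ℝ g x).le_opNorm h
      _ ≤ M * ‖t • h‖ * ‖h‖ := by
          gcongr
          simpa using hLip (x + t • h) x
      _ = M * ‖h‖ ^ 2 * t := by
          rw [norm_smul, Real.norm_of_nonneg ht.1]
          ring
  have hB : ∀ t, HasDerivAt (fun t => M * ‖h‖ ^ 2 * t ^ 2 / 2) (M * ‖h‖ ^ 2 * t) t := by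
    intro t
    exact (((hasDerivAt_pow 2 t).const_mul (M * ‖h‖ ^ 2)).div_const 2).congr_deriv (by ring)
  have := image_norm_le_of_norm_deriv_right_le_deriv_boundary
    (fun t _ => (hR t).continuousAt.continuousWithinAt) (fun t _ => (hR t).hasDerivWithinAt)
    (by simp [R]) hB hR'_le (Set.right_mem_Icc.2 zero_le_one)
  simp only [R, one_smul] at this
  linarith

end TaylorRemainder

theorem ContDiff.differentiable_gradient {H : Type*} [NormedAddCommGroup H]
    [InnerProductSpace ℝ H] [CompleteSpace H] {f : H → ℝ} (hf : ContDiff ℝ 2 f) :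
    Differentiable ℝ (gradient f) :=
  ((InnerProductSpace.toDual ℝ _).symm.contDiff.comp
    (hf.fderiv_right (m := 1) (by norm_num))).differentiable one_ne_zero

theorem half_mul_sq_add_mul_le_of_le_sqrt {M σ c θ ε r : ℝ} (hM : 0 < M) (hε : 0 ≤ ε)
    (hθ : 0 ≤ θ) (hr : 0 ≤ r) (hrσ : r ≤ σ / M) (hc : c ≤ θ * σ)
    (hσε : σ ≤ √(2 * M * ε / (1 + 2 * θ))) :
    M / 2 * r ^ 2 + c * r ≤ ε := by
  have hMr : M * r ≤ σ := by rwa [le_div_iff₀ hM, mul_comm] at hrσ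
  have hσ : 0 ≤ σ := (mul_nonneg hM.le hr).trans hMr
  have hσ2 : σ ^ 2 * (1 + 2 * θ) ≤ 2 * M * ε := by
    rw [← le_div_iff₀ (by positivity)]
    exact (Real.le_sqrt hσ (by positivity)).mp hσε
  have hMr2 : (M * r) ^ 2 ≤ σ ^ 2 := pow_le_pow_left₀ (mul_nonneg hM.le hr) hMr 2
  have hcr : c * r ≤ θ * σ * r := mul_le_mul_of_nonneg_right hc hr
  have hθσr : θ * σ * (M * r) ≤ θ * σ * σ :=
    mul_le_mul_of_nonneg_left hMr (mul_nonneg hθ hσ)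
  have : M * (M / 2 * r ^ 2 + c * r) ≤ M * ε := by nlinarith
  exact le_of_mul_le_mul_left this hM

/-- Early-termination guarantee: if `(∇²f(y) + (σ+λ)I) d = -∇f(y)` with `σ, λ ≥ 0`,
`λ ≤ (θ-1)σ` (`θ > 1`), `‖d‖ ≤ σ/M`, and `σ ≤ √(2Mε/(1+2θ))`, then
`‖∇f(y+d)‖ ≤ ε`. -/
theorem stmt13 {n : ℕ} (f : EuclideanSpace ℝ (Fin n) → ℝ) (M σ lam θ ε : ℝ)
    (y d : EuclideanSpace ℝ (Fin n))
    (hf : ContDiff ℝ 2 f) (hM : 0 < M) (hε : 0 < ε)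
    (hLip : ∀ u v : EuclideanSpace ℝ (Fin n),
      ‖fderiv ℝ (gradient f) u - fderiv ℝ (gradient f) v‖ ≤ M * ‖u - v‖)
    (hσ : 0 ≤ σ) (hlam : 0 ≤ lam) (hθ : 1 < θ) (hlamσ : lam ≤ (θ - 1) * σ)
    (heq : (fderiv ℝ (gradient f) y) d + (σ + lam) • d = - gradient f y)
    (hd : ‖d‖ ≤ σ / M)
    (hσε : σ ≤ Real.sqrt (2 * M * ε / (1 + 2 * θ))) :
    ‖gradient f (y + d)‖ ≤ ε := by
  have hremainder := norm_sub_sub_fderiv_le_of_lipschitz_fderiv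
    hf.differentiable_gradient hLip y d
  have hmodel : gradient f (y + d) - gradient f y - fderiv ℝ (gradient f) y d
      = gradient f (y + d) + (σ + lam) • d := by
    rw [eq_sub_of_add_eq heq]
    abel
  rw [hmodel] at hremainder
  calc ‖gradient f (y + d)‖
      ≤ ‖gradient f (y + d) + (σ + lam) • d‖ + ‖(σ + lam) • d‖ := norm_le_add_norm_add _ _
    _ ≤ M / 2 * ‖d‖ ^ 2 + (σ + lam) * ‖d‖ := by
        rw [norm_smul, Real.norm_of_nonneg (by linarith)]
        linarith
    _ ≤ ε := half_mul_sq_add_mul_le_of_le_sqrt hM hε.le (by linarith) (norm_nonneg d) hd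
        (by linarith) hσε
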